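/- arXiv:2004.03888 — 2 statements merged into one kernel-verified Lean document; each statement's English description precedes it below -/
import Mathlib

section
/- Let n ∈ ℕ and let Y : ℝ³ → ℝ be smooth, harmonic (ΔY(x) = 0 for all x), and satisfy Euler's homogeneity relation (x·∇Y)(x) = n·Y(x) for all x ∈ ℝ³ (as holds for a homogeneous harmonic polynomial of degree n). Then the angular gradient field x×∇Y is an eigenfunction of the Laplace–Beltrami operator: for every x ∈ ℝ³ and each component i ∈ {1,2,3}, Δ₀((y ↦ (y×∇Y)ᵢ(y)))(x) = −n(n+1)·(x×∇Y)ᵢ(x). -/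
noncomputable section
open MeasureTheory
open scoped RealInnerProductSpace

/-- ℝ³ with the Euclidean structure. -/
abbrev E3 : Type := EuclideanSpace ℝ (Fin 3)

/-- The `i`-th partial derivative ∂ᵢ f. -/
def pd (i : Fin 3) (f : E3 → ℝ) (x : E3) : ℝ := fderiv ℝ f x (EuclideanSpace.single i 1)

/-- Build a vector of E3 from its three coordinates. -/
def vec (a b c : ℝ) : E3 := (WithLp.equiv 2 (Fin 3 → ℝ)).symm ![a, b, c]

/-- The gradient ∇f. -/
def grad (f : E3 → ℝ) (x : E3) : E3 := vec (pd 0 f x) (pd 1 f x) (pd 2 f x)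

/-- The Laplacian Δf = ∂₁²f + ∂₂²f + ∂₃²f. -/
def lap (f : E3 → ℝ) (x : E3) : ℝ := pd 0 (pd 0 f) x + pd 1 (pd 1 f) x + pd 2 (pd 2 f) x

/-- The radial derivative (x·∇f)(x) = ⟨x, ∇f(x)⟩. -/
def rad (f : E3 → ℝ) (x : E3) : ℝ := ⟪x, grad f x⟫

/-- The cross product in ℝ³. -/
def cross (a b : E3) : E3 :=
  vec (a 1 * b 2 - a 2 * b 1) (a 2 * b 0 - a 0 * b 2) (a 0 * b 1 - a 1 * b 0)

/-- The angular gradient (x×∇f)(x) = x × ∇f(x). -/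
def angGrad (f : E3 → ℝ) (x : E3) : E3 := cross x (grad f x)

/-- The divergence ∇·F. -/
def fdiv (F : E3 → E3) (x : E3) : ℝ :=
  pd 0 (fun y => F y 0) x + pd 1 (fun y => F y 1) x + pd 2 (fun y => F y 2) x

/-- The curl ∇×F. -/
def curl (F : E3 → E3) (x : E3) : E3 :=
  vec (pd 1 (fun y => F y 2) x - pd 2 (fun y => F y 1) x)
      (pd 2 (fun y => F y 0) x - pd 0 (fun y => F y 2) x)
      (pd 0 (fun y => F y 1) x - pd 1 (fun y => F y 0) x)

/-- The Laplace–Beltrami operator Δ₀f(x) = ‖x‖²Δf(x) − (x·∇)(x·∇f)(x) − (x·∇f)(x). -/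
def lapBel (f : E3 → ℝ) (x : E3) : ℝ := ‖x‖^2 * lap f x - rad (rad f) x - rad f x

/-- Laplace–Beltrami acting componentwise on vector fields. -/
def lapBelV (F : E3 → E3) (x : E3) : E3 :=
  vec (lapBel (fun y => F y 0) x) (lapBel (fun y => F y 1) x) (lapBel (fun y => F y 2) x)

/-- The Sturm–Liouville operator of the first kind
L_c^{(α)}f = −Δf + (x·∇)(x·∇f) + (2α+3)(x·∇f) + c²‖x‖²f. -/
def SL (α c : ℝ) (f : E3 → ℝ) (x : E3) : ℝ :=
  -lap f x + rad (rad f) x + (2*α+3) * rad f x + c^2 * ‖x‖^2 * f x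

/-- L_c^{(α)} acting componentwise on vector fields. -/
def SLv (α c : ℝ) (F : E3 → E3) (x : E3) : E3 :=
  vec (SL α c (fun y => F y 0) x) (SL α c (fun y => F y 1) x) (SL α c (fun y => F y 2) x)

/-- The Sturm–Liouville operator of the second kind
D_c^{(α)}F(x) = (1−‖x‖²)^{−α}·(∇×((1−‖y‖²)^{α+1}∇×F))(x) − Δ₀F(x) + c²‖x‖²F(x). -/
def Dop (α c : ℝ) (F : E3 → E3) (x : E3) : E3 :=
  ((1 - ‖x‖^2) ^ (-α) : ℝ) • curl (fun y => ((1 - ‖y‖^2) ^ (α+1) : ℝ) • curl F y) x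
    - lapBelV F x + (c^2 * ‖x‖^2) • F x

/-- The operator (xᵢ∂ⱼ − xⱼ∂ᵢ). -/
def angDer (i j : Fin 3) (g : E3 → ℝ) (y : E3) : ℝ := y i * pd j g y - y j * pd i g y

namespace Aux9

variable {x : E3}

lemma single_app (i a : Fin 3) : (EuclideanSpace.single i (1:ℝ)) a = if i = a then 1 else 0 := by
  rw [EuclideanSpace.single_apply]; simp [eq_comm]

lemma contDiff_pd (i : Fin 3) {f : E3 → ℝ} (hf : ContDiff ℝ (⊤ : ℕ∞) f) : ContDiff ℝ (⊤ : ℕ∞) (pd i f) := by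
  have h1 : ContDiff ℝ (⊤ : ℕ∞) (fderiv ℝ f) := hf.fderiv_right (by simp)
  exact (ContinuousLinearMap.apply ℝ ℝ (EuclideanSpace.single i (1:ℝ))).contDiff.comp h1

lemma diffAt_pd (i : Fin 3) {f : E3 → ℝ} (hf : ContDiff ℝ (⊤ : ℕ∞) f) (x : E3) :
    DifferentiableAt ℝ (pd i f) x := ((contDiff_pd i hf).differentiable (by simp)).differentiableAt

lemma pd_comm {f : E3 → ℝ} (hf : ContDiff ℝ (⊤ : ℕ∞) f) (i j : Fin 3) (x : E3) :
    pd i (pd j f) x = pd j (pd i f) x := by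
  have h1 : ContDiff ℝ (⊤ : ℕ∞) (fderiv ℝ f) := hf.fderiv_right (by simp)
  have key : ∀ a b : Fin 3, pd a (pd b f) x
      = fderiv ℝ (fderiv ℝ f) x (EuclideanSpace.single a 1) (EuclideanSpace.single b 1) := by
    intro a b
    have hD := ((h1.differentiable (by simp) x).hasFDerivAt)
    have h2 := ((ContinuousLinearMap.apply ℝ ℝ (EuclideanSpace.single b (1:ℝ))).hasFDerivAt.comp x hD).fderiv
    calc pd a (pd b f) x
        = fderiv ℝ ((ContinuousLinearMap.apply ℝ ℝ (EuclideanSpace.single b (1:ℝ))) ∘ (fderiv ℝ f)) x (EuclideanSpace.single a 1) := rfl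
      _ = fderiv ℝ (fderiv ℝ f) x (EuclideanSpace.single a 1) (EuclideanSpace.single b 1) := by rw [h2]; rfl
  rw [key i j, key j i]
  exact (hf.contDiffAt.isSymmSndFDerivAt (by rw [minSmoothness_of_isRCLikeNormedField]; exact WithTop.coe_le_coe.mpr le_top)).eq _ _ |>.symm ▸ rfl

lemma pd_add {F G : E3 → ℝ} (hF : DifferentiableAt ℝ F x) (hG : DifferentiableAt ℝ G x) (i : Fin 3) :
    pd i (fun y => F y + G y) x = pd i F x + pd i G x := by
  unfold pd; rw [fderiv_fun_add hF hG]; rfl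

lemma pd_sub {F G : E3 → ℝ} (hF : DifferentiableAt ℝ F x) (hG : DifferentiableAt ℝ G x) (i : Fin 3) :
    pd i (fun y => F y - G y) x = pd i F x - pd i G x := by
  unfold pd; rw [fderiv_fun_sub hF hG]; rfl

lemma pd_const_mul {F : E3 → ℝ} (hF : DifferentiableAt ℝ F x) (c : ℝ) (i : Fin 3) :
    pd i (fun y => c * F y) x = c * pd i F x := by
  unfold pd; rw [fderiv_const_mul hF]; rfl

lemma diffAt_coord (a : Fin 3) (x : E3) : DifferentiableAt ℝ (fun y : E3 => y a) x :=
  (EuclideanSpace.proj a (𝕜 := ℝ)).differentiableAt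

lemma pd_coord_mul {F : E3 → ℝ} (hF : DifferentiableAt ℝ F x) (i a : Fin 3) :
    pd i (fun y => y a * F y) x = x a * pd i F x + (if i = a then 1 else 0) * F x := by
  unfold pd
  rw [fderiv_fun_mul (diffAt_coord a x) hF]
  have h1 : fderiv ℝ (fun y : E3 => y a) x = EuclideanSpace.proj a (𝕜 := ℝ) :=
    (EuclideanSpace.proj a (𝕜 := ℝ)).fderiv
  simp [h1, single_app, mul_comm]
  simp [eq_comm]

@[simp] lemma vec_app0 (p q r : ℝ) : vec p q r 0 = p := rfl
@[simp] lemma vec_app1 (p q r : ℝ) : vec p q r 1 = q := rfl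
@[simp] lemma vec_app2 (p q r : ℝ) : vec p q r 2 = r := rfl

lemma rad_eq (f : E3 → ℝ) (x : E3) :
    rad f x = x 0 * pd 0 f x + x 1 * pd 1 f x + x 2 * pd 2 f x := by
  simp [rad, grad, PiLp.inner_apply, Fin.sum_univ_three]
  ring

lemma pd_coord_mul_fun {F : E3 → ℝ} (hF : ContDiff ℝ (⊤ : ℕ∞) F) (i a : Fin 3) :
    pd i (fun y => y a * F y) = fun x => x a * pd i F x + (if i = a then 1 else 0) * F x :=
  funext fun x => pd_coord_mul (hF.differentiable (by simp)).differentiableAt i a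

lemma pd_combo (i a : Fin 3) (c : ℝ) {F G : E3 → ℝ} (hF : ContDiff ℝ (⊤ : ℕ∞) F) (hG : ContDiff ℝ (⊤ : ℕ∞) G)
    (x : E3) :
    pd i (fun y => y a * F y + c * G y) x
      = x a * pd i F x + (if i = a then 1 else 0) * F x + c * pd i G x := by
  have hF' : DifferentiableAt ℝ F x := (hF.differentiable (by simp)).differentiableAt
  have hG' : DifferentiableAt ℝ G x := (hG.differentiable (by simp)).differentiableAt
  rw [pd_add ((diffAt_coord a x).fun_mul hF') (hG'.const_mul c), pd_coord_mul hF', pd_const_mul hG']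

lemma lap_coord_mul (a : Fin 3) {F : E3 → ℝ} (hF : ContDiff ℝ (⊤ : ℕ∞) F) (x : E3) :
    lap (fun y => y a * F y) x = x a * lap F x + 2 * pd a F x := by
  have e : ∀ k : Fin 3, pd k (fun y => y a * F y)
      = fun x => x a * pd k F x + (if k = a then 1 else 0) * F x := fun k => pd_coord_mul_fun hF k a
  unfold lap
  rw [e 0, e 1, e 2, pd_combo 0 a _ (contDiff_pd 0 hF) hF x,
    pd_combo 1 a _ (contDiff_pd 1 hF) hF x, pd_combo 2 a _ (contDiff_pd 2 hF) hF x]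
  fin_cases a <;> simp <;> ring

lemma rad_coord_mul (a : Fin 3) {F : E3 → ℝ} (hF : ContDiff ℝ (⊤ : ℕ∞) F) (x : E3) :
    rad (fun y => y a * F y) x = x a * F x + x a * rad F x := by
  have hF' : DifferentiableAt ℝ F x := (hF.differentiable (by simp)).differentiableAt
  rw [rad_eq, rad_eq, pd_coord_mul hF' 0 a, pd_coord_mul hF' 1 a, pd_coord_mul hF' 2 a]
  fin_cases a <;> simp <;> ring

lemma lap_sub {F G : E3 → ℝ} (hF : ContDiff ℝ (⊤ : ℕ∞) F) (hG : ContDiff ℝ (⊤ : ℕ∞) G) (x : E3) :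
    lap (fun y => F y - G y) x = lap F x - lap G x := by
  have e : ∀ k : Fin 3, pd k (fun y => F y - G y) = fun x => pd k F x - pd k G x :=
    fun k => funext fun x =>
      pd_sub (hF.differentiable (by simp)).differentiableAt (hG.differentiable (by simp)).differentiableAt k
  unfold lap
  rw [e 0, e 1, e 2, pd_sub (diffAt_pd 0 hF x) (diffAt_pd 0 hG x) 0,
    pd_sub (diffAt_pd 1 hF x) (diffAt_pd 1 hG x) 1, pd_sub (diffAt_pd 2 hF x) (diffAt_pd 2 hG x) 2]
  ring

lemma rad_sub {F G : E3 → ℝ} (hF : ContDiff ℝ (⊤ : ℕ∞) F) (hG : ContDiff ℝ (⊤ : ℕ∞) G) (x : E3) :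
    rad (fun y => F y - G y) x = rad F x - rad G x := by
  have hF' : DifferentiableAt ℝ F x := (hF.differentiable (by simp)).differentiableAt
  have hG' : DifferentiableAt ℝ G x := (hG.differentiable (by simp)).differentiableAt
  rw [rad_eq, rad_eq, rad_eq, pd_sub hF' hG' 0, pd_sub hF' hG' 1, pd_sub hF' hG' 2]
  ring

lemma rad_const_mul (c : ℝ) {F : E3 → ℝ} (hF : ContDiff ℝ (⊤ : ℕ∞) F) (x : E3) :
    rad (fun y => c * F y) x = c * rad F x := by
  have hF' : DifferentiableAt ℝ F x := (hF.differentiable (by simp)).differentiableAt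
  rw [rad_eq, rad_eq, pd_const_mul hF' c 0, pd_const_mul hF' c 1, pd_const_mul hF' c 2]
  ring

section YFacts
variable {n : ℕ} {Y : E3 → ℝ} (hY : ContDiff ℝ (⊤ : ℕ∞) Y)

include hY

lemma lap_pd (hharm : ∀ x : E3, lap Y x = 0) (i : Fin 3) (x : E3) : lap (pd i Y) x = 0 := by
  have hc : ∀ a b : Fin 3, pd a (pd b Y) = pd b (pd a Y) :=
    fun a b => funext fun x => pd_comm hY a b x
  have step : ∀ k : Fin 3, pd k (pd k (pd i Y)) x = pd i (pd k (pd k Y)) x := by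
    intro k
    conv_lhs => rw [hc k i]
    exact pd_comm (contDiff_pd k hY) k i x
  have dA : DifferentiableAt ℝ (pd 0 (pd 0 Y)) x := diffAt_pd 0 (contDiff_pd 0 hY) x
  have dB : DifferentiableAt ℝ (pd 1 (pd 1 Y)) x := diffAt_pd 1 (contDiff_pd 1 hY) x
  have dC : DifferentiableAt ℝ (pd 2 (pd 2 Y)) x := diffAt_pd 2 (contDiff_pd 2 hY) x
  have h1 := pd_add (F := fun y => pd 0 (pd 0 Y) y + pd 1 (pd 1 Y) y) (G := pd 2 (pd 2 Y))
    (dA.add dB) dC i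
  have h2 := pd_add (F := pd 0 (pd 0 Y)) (G := pd 1 (pd 1 Y)) dA dB i
  have hz : (fun y : E3 => pd 0 (pd 0 Y) y + pd 1 (pd 1 Y) y + pd 2 (pd 2 Y) y)
      = fun _ : E3 => (0:ℝ) := funext fun y => hharm y
  calc lap (pd i Y) x
      = pd 0 (pd 0 (pd i Y)) x + pd 1 (pd 1 (pd i Y)) x + pd 2 (pd 2 (pd i Y)) x := rfl
    _ = pd i (pd 0 (pd 0 Y)) x + pd i (pd 1 (pd 1 Y)) x + pd i (pd 2 (pd 2 Y)) x := by
        rw [step 0, step 1, step 2]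
    _ = pd i (fun y : E3 => pd 0 (pd 0 Y) y + pd 1 (pd 1 Y) y + pd 2 (pd 2 Y) y) x := by
        rw [h1, h2]
    _ = pd i (fun _ : E3 => (0:ℝ)) x := by rw [hz]
    _ = 0 := by simp [pd]

lemma rad_pd {n : ℕ} (heuler : ∀ x : E3, rad Y x = (n : ℝ) * Y x) (i : Fin 3) (x : E3) :
    rad (pd i Y) x = ((n : ℝ) - 1) * pd i Y x := by
  have hY' : DifferentiableAt ℝ Y x := (hY.differentiable (by simp)).differentiableAt
  have d0 : DifferentiableAt ℝ (pd 0 Y) x := diffAt_pd 0 hY x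
  have d1 : DifferentiableAt ℝ (pd 1 Y) x := diffAt_pd 1 hY x
  have d2 : DifferentiableAt ℝ (pd 2 Y) x := diffAt_pd 2 hY x
  have h1 : (fun y : E3 => y 0 * pd 0 Y y + y 1 * pd 1 Y y + y 2 * pd 2 Y y)
      = fun y => (n:ℝ) * Y y := by
    funext y; rw [← rad_eq]; exact heuler y
  have h2 := congrArg (fun f : E3 → ℝ => pd i f x) h1
  simp only at h2
  rw [pd_add (F := fun y => y 0 * pd 0 Y y + y 1 * pd 1 Y y) (G := fun y => y 2 * pd 2 Y y)
      (((diffAt_coord 0 x).mul d0).add ((diffAt_coord 1 x).mul d1)) ((diffAt_coord 2 x).mul d2) i,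
    pd_add (F := fun y => y 0 * pd 0 Y y) (G := fun y => y 1 * pd 1 Y y)
      ((diffAt_coord 0 x).mul d0) ((diffAt_coord 1 x).mul d1) i,
    pd_coord_mul d0 i 0, pd_coord_mul d1 i 1, pd_coord_mul d2 i 2,
    pd_const_mul hY' ((n:ℝ)) i,
    pd_comm hY i 0 x, pd_comm hY i 1 x, pd_comm hY i 2 x] at h2
  rw [rad_eq]
  fin_cases i <;> simp at h2 ⊢ <;> linarith [h2]

end YFacts

lemma main_aux {n : ℕ} {Y : E3 → ℝ} (hY : ContDiff ℝ (⊤ : ℕ∞) Y)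
    (hharm : ∀ x : E3, lap Y x = 0)
    (heuler : ∀ x : E3, rad Y x = (n : ℝ) * Y x) (a b : Fin 3) (x : E3) :
    lapBel (fun y => y a * pd b Y y - y b * pd a Y y) x
      = -((n : ℝ) * ((n : ℝ) + 1)) * (x a * pd b Y x - x b * pd a Y x) := by
  have hpb : ContDiff ℝ (⊤ : ℕ∞) (pd b Y) := contDiff_pd b hY
  have hpa : ContDiff ℝ (⊤ : ℕ∞) (pd a Y) := contDiff_pd a hY
  have hca : ContDiff ℝ (⊤ : ℕ∞) (fun y : E3 => y a) := (EuclideanSpace.proj a (𝕜 := ℝ)).contDiff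
  have hcb : ContDiff ℝ (⊤ : ℕ∞) (fun y : E3 => y b) := (EuclideanSpace.proj b (𝕜 := ℝ)).contDiff
  have hA : ContDiff ℝ (⊤ : ℕ∞) (fun y : E3 => y a * pd b Y y) := hca.mul hpb
  have hB : ContDiff ℝ (⊤ : ℕ∞) (fun y : E3 => y b * pd a Y y) := hcb.mul hpa
  have hg : ContDiff ℝ (⊤ : ℕ∞) (fun y : E3 => y a * pd b Y y - y b * pd a Y y) := hA.sub hB
  have hlap : lap (fun y : E3 => y a * pd b Y y - y b * pd a Y y) x = 0 := by
    rw [lap_sub hA hB x, lap_coord_mul a hpb x, lap_coord_mul b hpa x,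
      lap_pd hY hharm b x, lap_pd hY hharm a x, pd_comm hY a b x]
    ring
  have hrad : ∀ z : E3, rad (fun y : E3 => y a * pd b Y y - y b * pd a Y y) z
      = (n:ℝ) * (z a * pd b Y z - z b * pd a Y z) := by
    intro z
    rw [rad_sub hA hB z, rad_coord_mul a hpb z, rad_coord_mul b hpa z,
      rad_pd hY heuler b z, rad_pd hY heuler a z]
    ring
  have hradf : rad (fun y : E3 => y a * pd b Y y - y b * pd a Y y)
      = fun z : E3 => (n:ℝ) * (z a * pd b Y z - z b * pd a Y z) := funext hrad
  have e1 : rad (rad (fun y : E3 => y a * pd b Y y - y b * pd a Y y)) x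
      = (n:ℝ) * ((n:ℝ) * (x a * pd b Y x - x b * pd a Y x)) := by
    rw [hradf]
    have h4 : rad (fun z : E3 => (n:ℝ) * (z a * pd b Y z - z b * pd a Y z)) x
        = (n:ℝ) * rad (fun z : E3 => z a * pd b Y z - z b * pd a Y z) x := rad_const_mul _ hg x
    rw [h4, hrad x]
  unfold lapBel
  rw [hlap, e1, hrad x]
  ring

end Aux9

/-- for a harmonic function satisfying Euler's relation of degree n,
the angular gradient is a Δ₀-eigenfunction with eigenvalue −n(n+1). -/
theorem stmt_9 (n : ℕ) (Y : E3 → ℝ) (hY : ContDiff ℝ (⊤ : ℕ∞) Y)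
    (hharm : ∀ x : E3, lap Y x = 0)
    (heuler : ∀ x : E3, rad Y x = (n : ℝ) * Y x) :
    ∀ x : E3, ∀ i : Fin 3,
      lapBel (fun y => angGrad Y y i) x = -((n : ℝ) * ((n : ℝ) + 1)) * angGrad Y x i := by
  intro x i
  have key := Aux9.main_aux hY hharm heuler
  fin_cases i
  · have e : (fun y : E3 => angGrad Y y 0) = fun y : E3 => y 1 * pd 2 Y y - y 2 * pd 1 Y y := by
      funext y; simp [angGrad, cross, grad]
    show lapBel (fun y : E3 => angGrad Y y 0) x = -((n : ℝ) * ((n : ℝ) + 1)) * angGrad Y x 0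
    rw [e, key 1 2 x]
    simp [angGrad, cross, grad]
  · have e : (fun y : E3 => angGrad Y y 1) = fun y : E3 => y 2 * pd 0 Y y - y 0 * pd 2 Y y := by
      funext y; simp [angGrad, cross, grad]
    show lapBel (fun y : E3 => angGrad Y y 1) x = -((n : ℝ) * ((n : ℝ) + 1)) * angGrad Y x 1
    rw [e, key 2 0 x]
    simp [angGrad, cross, grad]
  · have e : (fun y : E3 => angGrad Y y 2) = fun y : E3 => y 0 * pd 1 Y y - y 1 * pd 0 Y y := by
      funext y; simp [angGrad, cross, grad]
    show lapBel (fun y : E3 => angGrad Y y 2) x = -((n : ℝ) * ((n : ℝ) + 1)) * angGrad Y x 2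
    rw [e, key 0 1 x]
    simp [angGrad, cross, grad]
end
end

section
/- Let F : ℝ³ → ℝ³ be a smooth vector field and let α, c ∈ ℝ. Then for every x ∈ ℝ³, ∇×(L_c^{(α)}F)(x) = L_c^{(α+1)}(∇×F)(x) + (2α+4)(∇×F)(x) + 2c²·(x × F(x)), where L_c^{(β)} acts componentwise on vector fields. -/
noncomputable section
open MeasureTheory
open scoped RealInnerProductSpace

-- helper notation
local notation "ee" i => EuclideanSpace.single i (1:ℝ)

lemma vec_0 (a b c : ℝ) : vec a b c 0 = a := rfl
lemma vec_1 (a b c : ℝ) : vec a b c 1 = b := rfl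
lemma vec_2 (a b c : ℝ) : vec a b c 2 = c := rfl

lemma smooth_pd {f : E3 → ℝ} (hf : ContDiff ℝ (⊤ : ℕ∞) f) (i : Fin 3) :
    ContDiff ℝ (⊤ : ℕ∞) (pd i f) := by
  have h1 : ContDiff ℝ (⊤ : ℕ∞) (fderiv ℝ f) := hf.fderiv_right le_rfl
  exact h1.clm_apply contDiff_const

lemma pd_add {g h : E3 → ℝ} (hg : DifferentiableAt ℝ g x) (hh : DifferentiableAt ℝ h x)
    (i : Fin 3) : pd i (fun y => g y + h y) x = pd i g x + pd i h x := by
  simp [pd, fderiv_fun_add hg hh]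

lemma pd_sub {g h : E3 → ℝ} (hg : DifferentiableAt ℝ g x) (hh : DifferentiableAt ℝ h x)
    (i : Fin 3) : pd i (fun y => g y - h y) x = pd i g x - pd i h x := by
  simp [pd, fderiv_fun_sub hg hh]

lemma pd_const_mul {g : E3 → ℝ} (hg : DifferentiableAt ℝ g x) (a : ℝ)
    (i : Fin 3) : pd i (fun y => a * g y) x = a * pd i g x := by
  simp [pd, fderiv_const_mul hg a]

lemma pd_mul {g h : E3 → ℝ} (hg : DifferentiableAt ℝ g x) (hh : DifferentiableAt ℝ h x)
    (i : Fin 3) : pd i (fun y => g y * h y) x = pd i g x * h x + g x * pd i h x := by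
  simp [pd, fderiv_fun_mul hg hh]; ring

lemma pd_coord (i j : Fin 3) (x : E3) :
    pd i (fun y : E3 => y j) x = if i = j then 1 else 0 := by
  have : (fun y : E3 => y j) = fun y => (EuclideanSpace.proj j : E3 →L[ℝ] ℝ) y := rfl
  rw [pd, this, ContinuousLinearMap.fderiv]
  simp [EuclideanSpace.proj, EuclideanSpace.single_apply, eq_comm]

lemma norm_sq_eq (x : E3) : ‖x‖^2 = x 0 * x 0 + x 1 * x 1 + x 2 * x 2 := by
  rw [EuclideanSpace.norm_sq_eq]
  simp [Fin.sum_univ_three, sq]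

lemma rad_eq (f : E3 → ℝ) (x : E3) :
    rad f x = x 0 * pd 0 f x + x 1 * pd 1 f x + x 2 * pd 2 f x := by
  simp [rad, grad, PiLp.inner_apply, Fin.sum_univ_three, vec_0, vec_1, vec_2]; ring

lemma pd_comm {f : E3 → ℝ} (hf : ContDiff ℝ (⊤ : ℕ∞) f) (i j : Fin 3) (x : E3) :
    pd i (pd j f) x = pd j (pd i f) x := by
  have hsym : IsSymmSndFDerivAt ℝ f x :=
    (hf.contDiffAt).isSymmSndFDerivAt (by norm_num; exact WithTop.coe_le_coe.mpr le_top)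
  have hd : DifferentiableAt ℝ (fderiv ℝ f) x :=
    (((hf.fderiv_right le_rfl : ContDiff ℝ (⊤ : ℕ∞) (fderiv ℝ f))).differentiable (by simp)).differentiableAt
  have key : ∀ (a b : Fin 3), pd a (pd b f) x
      = fderiv ℝ (fderiv ℝ f) x (EuclideanSpace.single a 1) (EuclideanSpace.single b 1) := by
    intro a b
    have : pd b f = fun y => fderiv ℝ f y (EuclideanSpace.single b 1) := rfl
    rw [pd, this, fderiv_clm_apply hd (differentiableAt_const _)]
    simp
  rw [key i j, key j i, hsym]

lemma dAt {g : E3 → ℝ} (h : ContDiff ℝ (⊤ : ℕ∞) g) (x : E3) : DifferentiableAt ℝ g x :=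
  (h.differentiable (by simp)).differentiableAt

lemma smooth_coord (j : Fin 3) : ContDiff ℝ (⊤ : ℕ∞) (fun y : E3 => y j) :=
  (EuclideanSpace.proj j : E3 →L[ℝ] ℝ).contDiff

lemma rad_fun (f : E3 → ℝ) :
    rad f = fun y => y 0 * pd 0 f y + y 1 * pd 1 f y + y 2 * pd 2 f y :=
  funext (rad_eq f)

lemma smooth_rad {f : E3 → ℝ} (hf : ContDiff ℝ (⊤ : ℕ∞) f) : ContDiff ℝ (⊤ : ℕ∞) (rad f) := by
  rw [rad_fun]
  exact (((smooth_coord 0).mul (smooth_pd hf 0)).add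
    ((smooth_coord 1).mul (smooth_pd hf 1))).add ((smooth_coord 2).mul (smooth_pd hf 2))

lemma smooth_lap {f : E3 → ℝ} (hf : ContDiff ℝ (⊤ : ℕ∞) f) : ContDiff ℝ (⊤ : ℕ∞) (lap f) := by
  have : lap f = fun x => pd 0 (pd 0 f) x + pd 1 (pd 1 f) x + pd 2 (pd 2 f) x := rfl
  rw [this]
  exact ((smooth_pd (smooth_pd hf 0) 0).add (smooth_pd (smooth_pd hf 1) 1)).add
    (smooth_pd (smooth_pd hf 2) 2)

lemma pd_rad {f : E3 → ℝ} (hf : ContDiff ℝ (⊤ : ℕ∞) f) (i : Fin 3) (x : E3) :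
    pd i (rad f) x = pd i f x + rad (pd i f) x := by
  have dmul : ∀ j : Fin 3, DifferentiableAt ℝ (fun y : E3 => y j * pd j f y) x :=
    fun j => (dAt (smooth_coord j) x).mul (dAt (smooth_pd hf j) x)
  rw [rad_fun]
  rw [pd_add ((dmul 0).fun_add (dmul 1)) (dmul 2), pd_add (dmul 0) (dmul 1),
    pd_mul (dAt (smooth_coord 0) x) (dAt (smooth_pd hf 0) x),
    pd_mul (dAt (smooth_coord 1) x) (dAt (smooth_pd hf 1) x),
    pd_mul (dAt (smooth_coord 2) x) (dAt (smooth_pd hf 2) x),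
    pd_coord, pd_coord, pd_coord,
    pd_comm hf i 0, pd_comm hf i 1, pd_comm hf i 2, rad_eq]
  fin_cases i <;> simp <;> ring

lemma pd_lap {f : E3 → ℝ} (hf : ContDiff ℝ (⊤ : ℕ∞) f) (i : Fin 3) (x : E3) :
    pd i (lap f) x = lap (pd i f) x := by
  have hfun : ∀ j : Fin 3, pd i (pd j f) = pd j (pd i f) :=
    fun j => funext (pd_comm hf i j)
  have hlap : lap f = fun y => pd 0 (pd 0 f) y + pd 1 (pd 1 f) y + pd 2 (pd 2 f) y := rfl
  have d : ∀ j : Fin 3, DifferentiableAt ℝ (pd j (pd j f)) x :=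
    fun j => dAt (smooth_pd (smooth_pd hf j) j) x
  rw [hlap, pd_add ((d 0).fun_add (d 1)) (d 2), pd_add (d 0) (d 1),
    pd_comm (smooth_pd hf 0) i 0, pd_comm (smooth_pd hf 1) i 1,
    pd_comm (smooth_pd hf 2) i 2, hfun 0, hfun 1, hfun 2]
  rfl

lemma pd_neg {g : E3 → ℝ} (i : Fin 3) (x : E3) :
    pd i (fun y => -g y) x = -pd i g x := by
  simp [pd, fderiv_neg]

lemma rad_add {g h : E3 → ℝ} (hg : ContDiff ℝ (⊤ : ℕ∞) g) (hh : ContDiff ℝ (⊤ : ℕ∞) h) (x : E3) :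
    rad (fun y => g y + h y) x = rad g x + rad h x := by
  rw [rad_eq, rad_eq, rad_eq, pd_add (dAt hg x) (dAt hh x), pd_add (dAt hg x) (dAt hh x),
    pd_add (dAt hg x) (dAt hh x)]
  ring

lemma smooth_sumsq : ContDiff ℝ (⊤ : ℕ∞) (fun y : E3 => y 0 * y 0 + y 1 * y 1 + y 2 * y 2) :=
  (((smooth_coord 0).mul (smooth_coord 0)).add
    ((smooth_coord 1).mul (smooth_coord 1))).add ((smooth_coord 2).mul (smooth_coord 2))

lemma pd_normsq_mul {f : E3 → ℝ} (hf : ContDiff ℝ (⊤ : ℕ∞) f) (a : ℝ) (i : Fin 3) (x : E3) :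
    pd i (fun y => a * ‖y‖^2 * f y) x = a * ‖x‖^2 * pd i f x + 2 * a * x i * f x := by
  have h1 : (fun y : E3 => a * ‖y‖^2 * f y)
      = fun y => (a * (y 0 * y 0 + y 1 * y 1 + y 2 * y 2)) * f y := by
    funext y; rw [norm_sq_eq]
  have dc : ∀ j : Fin 3, DifferentiableAt ℝ (fun y : E3 => y j) x :=
    fun j => dAt (smooth_coord j) x
  have dsq : DifferentiableAt ℝ (fun y : E3 => y 0 * y 0 + y 1 * y 1 + y 2 * y 2) x :=
    dAt smooth_sumsq x
  rw [h1, pd_mul (((differentiableAt_const a).fun_mul dsq)) (dAt hf x),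
    pd_const_mul dsq, pd_add (((dc 0).fun_mul (dc 0)).fun_add ((dc 1).fun_mul (dc 1))) ((dc 2).fun_mul (dc 2)),
    pd_add ((dc 0).fun_mul (dc 0)) ((dc 1).fun_mul (dc 1)),
    pd_mul (dc 0) (dc 0), pd_mul (dc 1) (dc 1), pd_mul (dc 2) (dc 2),
    pd_coord, pd_coord, pd_coord, norm_sq_eq]
  fin_cases i <;> simp <;> ring

lemma pd_SL {f : E3 → ℝ} (hf : ContDiff ℝ (⊤ : ℕ∞) f) (α c : ℝ) (i : Fin 3) (x : E3) :
    pd i (SL α c f) x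
      = SL (α+1) c (pd i f) x + (2*α+4) * pd i f x + 2 * c^2 * x i * f x := by
  have hSL : SL α c f = fun y =>
      (-lap f y + rad (rad f) y + (2*α+3) * rad f y) + c^2 * ‖y‖^2 * f y := rfl
  have d1 : DifferentiableAt ℝ (fun y => -lap f y) x := (dAt (smooth_lap hf) x).neg
  have d2 : DifferentiableAt ℝ (rad (rad f)) x := dAt (smooth_rad (smooth_rad hf)) x
  have d3 : DifferentiableAt ℝ (fun y => (2*α+3) * rad f y) x :=
    (differentiableAt_const _).mul (dAt (smooth_rad hf) x)
  have d4 : DifferentiableAt ℝ (fun y => c^2 * ‖y‖^2 * f y) x :=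
    (((differentiableAt_const _).mul (dAt (contDiff_norm_sq ℝ (n := (⊤ : ℕ∞))) x)).mul (dAt hf x))
  have hpdrad : pd i (rad f) = fun y => pd i f y + rad (pd i f) y := funext (pd_rad hf i)
  rw [hSL, pd_add ((d1.fun_add d2).fun_add d3) d4, pd_add (d1.fun_add d2) d3, pd_add d1 d2,
    pd_neg, pd_lap hf, pd_rad (smooth_rad hf) i x, hpdrad,
    rad_add (smooth_pd hf i) (smooth_rad (smooth_pd hf i)) x,
    pd_const_mul (dAt (smooth_rad hf) x), pd_rad hf i x,
    pd_normsq_mul hf (c^2) i x]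
  have hRHS : SL (α+1) c (pd i f) x
      = -lap (pd i f) x + rad (rad (pd i f)) x + (2*(α+1)+3) * rad (pd i f) x
        + c^2 * ‖x‖^2 * pd i f x := rfl
  rw [hRHS]; ring

lemma pd_sub_fun {g h : E3 → ℝ} (hg : ContDiff ℝ (⊤ : ℕ∞) g) (hh : ContDiff ℝ (⊤ : ℕ∞) h) (i : Fin 3) :
    pd i (fun y => g y - h y) = fun x => pd i g x - pd i h x :=
  funext fun x => pd_sub (dAt hg x) (dAt hh x) i

lemma rad_sub {g h : E3 → ℝ} (hg : ContDiff ℝ (⊤ : ℕ∞) g) (hh : ContDiff ℝ (⊤ : ℕ∞) h) (x : E3) :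
    rad (fun y => g y - h y) x = rad g x - rad h x := by
  rw [rad_eq, rad_eq, rad_eq, pd_sub (dAt hg x) (dAt hh x), pd_sub (dAt hg x) (dAt hh x),
    pd_sub (dAt hg x) (dAt hh x)]
  ring

lemma rad_sub_fun {g h : E3 → ℝ} (hg : ContDiff ℝ (⊤ : ℕ∞) g) (hh : ContDiff ℝ (⊤ : ℕ∞) h) :
    rad (fun y => g y - h y) = fun x => rad g x - rad h x :=
  funext fun x => rad_sub hg hh x

lemma lap_sub {g h : E3 → ℝ} (hg : ContDiff ℝ (⊤ : ℕ∞) g) (hh : ContDiff ℝ (⊤ : ℕ∞) h) (x : E3) :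
    lap (fun y => g y - h y) x = lap g x - lap h x := by
  have hl : ∀ (u v : E3 → ℝ), lap (fun y => u y - v y) x
      = pd 0 (pd 0 (fun y => u y - v y)) x + pd 1 (pd 1 (fun y => u y - v y)) x
        + pd 2 (pd 2 (fun y => u y - v y)) x := fun _ _ => rfl
  rw [hl, pd_sub_fun hg hh, pd_sub_fun hg hh, pd_sub_fun hg hh,
    pd_sub (dAt (smooth_pd hg 0) x) (dAt (smooth_pd hh 0) x),
    pd_sub (dAt (smooth_pd hg 1) x) (dAt (smooth_pd hh 1) x),
    pd_sub (dAt (smooth_pd hg 2) x) (dAt (smooth_pd hh 2) x)]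
  have : ∀ u : E3 → ℝ, lap u x
      = pd 0 (pd 0 u) x + pd 1 (pd 1 u) x + pd 2 (pd 2 u) x := fun _ => rfl
  rw [this g, this h]; ring

lemma SL_sub {g h : E3 → ℝ} (hg : ContDiff ℝ (⊤ : ℕ∞) g) (hh : ContDiff ℝ (⊤ : ℕ∞) h) (β c : ℝ) (x : E3) :
    SL β c (fun y => g y - h y) x = SL β c g x - SL β c h x := by
  have hdef : ∀ u : E3 → ℝ, SL β c u x
      = -lap u x + rad (rad u) x + (2*β+3) * rad u x + c^2 * ‖x‖^2 * u x := fun _ => rfl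
  rw [hdef, hdef, hdef, lap_sub hg hh, rad_sub_fun hg hh,
    rad_sub (smooth_rad hg) (smooth_rad hh)]
  beta_reduce
  ring

lemma key {g h : E3 → ℝ} (hg : ContDiff ℝ (⊤ : ℕ∞) g) (hh : ContDiff ℝ (⊤ : ℕ∞) h)
    (α c : ℝ) (i j : Fin 3) (x : E3) :
    pd i (SL α c h) x - pd j (SL α c g) x
      = SL (α+1) c (fun y => pd i h y - pd j g y) x
        + (2*α+4) * (pd i h x - pd j g x) + 2*c^2 * (x i * h x - x j * g x) := by
  rw [pd_SL hh α c i x, pd_SL hg α c j x,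
    SL_sub (smooth_pd hh i) (smooth_pd hg j) (α+1) c x]
  ring

/-- ∇×(L_c^{(α)}F) = L_c^{(α+1)}(∇×F) + (2α+4)(∇×F) + 2c²(x × F). -/
theorem stmt_12 (F : E3 → E3) (hF : ContDiff ℝ (⊤ : ℕ∞) F) (α c : ℝ) :
    ∀ x : E3,
      curl (SLv α c F) x
        = SLv (α+1) c (curl F) x + (2*α+4) • curl F x + (2*c^2) • cross x (F x) := by
  intro x
  have hf : ∀ j : Fin 3, ContDiff ℝ (⊤ : ℕ∞) (fun y => F y j) := fun j =>
    (EuclideanSpace.proj j : E3 →L[ℝ] ℝ).contDiff.comp hF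
  ext i
  fin_cases i
  · simp only [PiLp.add_apply, PiLp.smul_apply, smul_eq_mul]
    show pd 1 (SL α c (fun y => F y 2)) x - pd 2 (SL α c (fun y => F y 1)) x
      = SL (α+1) c (fun y => pd 1 (fun z => F z 2) y - pd 2 (fun z => F z 1) y) x
        + (2*α+4) * (pd 1 (fun z => F z 2) x - pd 2 (fun z => F z 1) x)
        + 2*c^2 * (x 1 * F x 2 - x 2 * F x 1)
    exact key (hf 1) (hf 2) α c 1 2 x
  · simp only [PiLp.add_apply, PiLp.smul_apply, smul_eq_mul]
    show pd 2 (SL α c (fun y => F y 0)) x - pd 0 (SL α c (fun y => F y 2)) x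
      = SL (α+1) c (fun y => pd 2 (fun z => F z 0) y - pd 0 (fun z => F z 2) y) x
        + (2*α+4) * (pd 2 (fun z => F z 0) x - pd 0 (fun z => F z 2) x)
        + 2*c^2 * (x 2 * F x 0 - x 0 * F x 2)
    exact key (hf 2) (hf 0) α c 2 0 x
  · simp only [PiLp.add_apply, PiLp.smul_apply, smul_eq_mul]
    show pd 0 (SL α c (fun y => F y 1)) x - pd 1 (SL α c (fun y => F y 0)) x
      = SL (α+1) c (fun y => pd 0 (fun z => F z 1) y - pd 1 (fun z => F z 0) y) x
        + (2*α+4) * (pd 0 (fun z => F z 1) x - pd 1 (fun z => F z 0) x)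
        + 2*c^2 * (x 0 * F x 1 - x 1 * F x 0)
    exact key (hf 0) (hf 1) α c 0 1 x
end
end
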